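/- No random nearest neighbor digraph is a vertex-arc random digraph: with n ≥ 3, 1 ≤ k < n−1, d ≥ 1, a norm |·| on ℝ^d, and a Borel probability measure μ on ℝ^d whose n-fold product gives full measure to tie-free configurations, there exist no probability space (Ω,ν) and measurable φ : Ω × Ω → [0,1] such that for every digraph D on [n], μⁿ({x : kNND(x) = D}) = ∫ ∏_{(i,j)∈A(D)} φ(y_i,y_j) · ∏_{(i,j)∉A(D), i≠j} (1 − φ(y_i,y_j)) dνⁿ(y). -/

import Mathlib

open MeasureTheory Finset

/-- A finset of ordered pairs is (the arc set of) a digraph on `Fin n` if it has no loops. -/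
def IsDigraph {n : ℕ} (A : Finset (Fin n × Fin n)) : Prop := ∀ p ∈ A, p.1 ≠ p.2

/-- The arc set of the `k` nearest neighbor digraph of the points `x 1, …, x n` in `ℝ^d`. -/
noncomputable def kNND {n d : ℕ} (k : ℕ) (nrm : (Fin d → ℝ) → ℝ)
    (x : Fin n → Fin d → ℝ) : Finset (Fin n × Fin n) :=
  Finset.univ.filter fun p : Fin n × Fin n => p.1 ≠ p.2 ∧
    (Finset.univ.filter fun l : Fin n =>
      l ≠ p.1 ∧ nrm (x p.1 - x l) < nrm (x p.1 - x p.2)).card < k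

/-- A configuration of points is tie-free if for each `i` the distances from `x i` to the
other points are pairwise distinct. -/
def TieFree {n d : ℕ} (nrm : (Fin d → ℝ) → ℝ) (x : Fin n → Fin d → ℝ) : Prop :=
  ∀ i j l : Fin n, j ≠ i → l ≠ i → j ≠ l → nrm (x i - x j) ≠ nrm (x i - x l)

/-- The probability that the vertex-arc random digraph `D(n, Ω, ν, φ)` equals the digraph
with arc set `A`. -/
noncomputable def vardP {Ω : Type*} [MeasurableSpace Ω] (ν : Measure Ω) {n : ℕ}
    (φ : Ω → Ω → ℝ) (A : Finset (Fin n × Fin n)) : ℝ :=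
  ∫ y : Fin n → Ω,
    (∏ p ∈ A, φ (y p.1) (y p.2)) *
      ∏ p ∈ Finset.univ.filter (fun p : Fin n × Fin n => p.1 ≠ p.2 ∧ p ∉ A),
        (1 - φ (y p.1) (y p.2)) ∂(Measure.pi fun _ : Fin n => ν)

/-!
The nearest neighbour of a vertex is always one of its `k` out-neighbours and, in a tie-free
configuration with `k < n - 1`, the farthest one never is. So in the random nearest neighbour
digraph the out-neighbourhood of vertex `0` is almost surely neither empty nor everything.
In a vertex-arc random digraph, conditionally on the label `y 0 = u`, the `n - 1` arcs out of `0`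
are independent, each present with probability `q u = ∫ φ u v dν`; so the out-neighbourhood
of `0` is empty or full with probability `∫ (1 - q) ^ (n - 1) dν + ∫ q ^ (n - 1) dν > 0`.
-/

lemma sum_powerset_prod_mul_prod_one_sub {ι R : Type*} [DecidableEq ι] [CommRing R]
    {S T U : Finset ι} (hST : S ⊆ T) (hTU : T ⊆ U) (a : ι → R) :
    ∑ B ∈ (U \ T).powerset, (∏ p ∈ S ∪ B, a p) * ∏ p ∈ U \ (S ∪ B), (1 - a p) =
      (∏ p ∈ S, a p) * ∏ p ∈ T \ S, (1 - a p) := by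
  have hsplit : ∀ B ∈ (U \ T).powerset,
      (∏ p ∈ S ∪ B, a p) * ∏ p ∈ U \ (S ∪ B), (1 - a p) =
        (∏ p ∈ S, a p) * (∏ p ∈ T \ S, (1 - a p)) *
          ((∏ p ∈ B, a p) * ∏ p ∈ (U \ T) \ B, (1 - a p)) := by
    intro B hB
    have hB : B ⊆ U \ T := mem_powerset.1 hB
    have hSB : Disjoint S B :=
      disjoint_of_subset_left hST (disjoint_of_subset_right hB disjoint_sdiff)
    have hcompl : U \ (S ∪ B) = (T \ S) ∪ ((U \ T) \ B) := by
      ext p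
      have hpST := @hST p
      have hpTU := @hTU p
      have hpB := @hB p
      simp only [mem_sdiff, mem_union] at hpB ⊢
      tauto
    rw [prod_union hSB, hcompl, prod_union (disjoint_of_subset_left sdiff_subset
      (disjoint_of_subset_right sdiff_subset disjoint_sdiff))]
    ring
  rw [sum_congr rfl hsplit, ← mul_sum, ← prod_add]
  simp

def outArcs {n : ℕ} (i : Fin n) : Finset (Fin n × Fin n) :=
  univ.filter fun p => p.1 = i ∧ p.2 ≠ i

lemma mem_outArcs {n : ℕ} {i : Fin n} {p : Fin n × Fin n} :
    p ∈ outArcs i ↔ p.1 = i ∧ p.2 ≠ i := by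
  simp [outArcs]

lemma outArcs_subset_offDiag {n : ℕ} (i : Fin n) : outArcs i ⊆ univ.offDiag := by
  intro p hp
  rw [mem_outArcs] at hp
  simpa [hp.1] using hp.2.symm

lemma prod_outArcs {M : Type*} [CommMonoid M] {m : ℕ} (i : Fin (m + 1))
    (F : Fin (m + 1) × Fin (m + 1) → M) :
    ∏ p ∈ outArcs i, F p = ∏ j : Fin m, F (i, i.succAbove j) := by
  symm
  refine prod_nbij (fun j => (i, i.succAbove j)) (fun j _ => ?_) (fun j _ l _ h => ?_)
    (fun p hp => ?_) (fun _ _ => rfl)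
  · simp [mem_outArcs, Fin.succAbove_ne]
  · exact Fin.succAbove_right_injective (congrArg Prod.snd h)
  · obtain ⟨rfl, hp⟩ := mem_outArcs.1 hp
    obtain ⟨j, hj⟩ := Fin.exists_succAbove_eq hp
    exact ⟨j, mem_coe.2 (mem_univ j), Prod.ext rfl hj⟩

section kNND

variable {n d k : ℕ} {nrm : (Fin d → ℝ) → ℝ} {x : Fin n → Fin d → ℝ}

lemma mem_kNND {i j : Fin n} :
    (i, j) ∈ kNND k nrm x ↔
      i ≠ j ∧ #{l | l ≠ i ∧ nrm (x i - x l) < nrm (x i - x j)} < k := by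
  simp [kNND]

lemma kNND_inter_outArcs_nonempty (hk : 0 < k) (hn : 1 < n) (i : Fin n) :
    (kNND k nrm x ∩ outArcs i).Nonempty := by
  have hne : (univ.erase i).Nonempty := by
    rw [← card_pos, card_erase_of_mem (mem_univ i), card_univ, Fintype.card_fin]
    omega
  obtain ⟨j, hj, hmin⟩ := (univ.erase i).exists_min_image (fun j => nrm (x i - x j)) hne
  have hji : j ≠ i := ne_of_mem_erase hj
  refine ⟨(i, j), mem_inter.2 ⟨mem_kNND.2 ⟨hji.symm, ?_⟩, mem_outArcs.2 ⟨rfl, hji⟩⟩⟩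
  rwa [filter_false_of_mem fun l _ ⟨hli, hlt⟩ =>
    (hmin l (mem_erase.2 ⟨hli, mem_univ l⟩)).not_gt hlt]

lemma not_outArcs_subset_kNND (htf : TieFree nrm x) (hkn : k < n - 1) (i : Fin n) :
    ¬ outArcs i ⊆ kNND k nrm x := by
  have hne : (univ.erase i).Nonempty := by
    rw [← card_pos, card_erase_of_mem (mem_univ i), card_univ, Fintype.card_fin]
    omega
  obtain ⟨j, hj, hmax⟩ := (univ.erase i).exists_max_image (fun j => nrm (x i - x j)) hne
  have hji : j ≠ i := ne_of_mem_erase hj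
  intro hsub
  have hcloser : (univ.erase i).erase j ⊆
      ({l | l ≠ i ∧ nrm (x i - x l) < nrm (x i - x j)} : Finset (Fin n)) := by
    intro l hl
    obtain ⟨hlj, hli, -⟩ := mem_erase.1 hl |>.imp_right mem_erase.1
    exact mem_filter.2 ⟨mem_univ l, hli,
      (hmax l (mem_erase.2 ⟨hli, mem_univ l⟩)).lt_of_ne (htf i l j hli hji hlj)⟩
  have hcard := (card_le_card hcloser).trans_lt
    (mem_kNND.1 (hsub (mem_outArcs.2 ⟨rfl, hji⟩))).2
  rw [card_erase_of_mem (mem_erase.2 ⟨hji, mem_univ j⟩), card_erase_of_mem (mem_univ i),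
    card_univ, Fintype.card_fin] at hcard
  omega

end kNND

lemma isDigraph_of_subset_offDiag {n : ℕ} {A : Finset (Fin n × Fin n)}
    (hA : A ⊆ univ.offDiag) : IsDigraph A := fun _ hp => (mem_offDiag.1 (hA hp)).2.2

section VARD

lemma abs_le_one_of_mem_Icc {x : ℝ} (hx : x ∈ Set.Icc (0 : ℝ) 1) : |x| ≤ 1 :=
  abs_le.2 ⟨by linarith [hx.1], hx.2⟩

variable {Ω : Type*} [MeasurableSpace Ω] {ν : Measure Ω} {φ : Ω → Ω → ℝ}

lemma vardP_eq_integral {n : ℕ} (A : Finset (Fin n × Fin n)) :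
    vardP ν φ A = ∫ y : Fin n → Ω, (∏ p ∈ A, φ (y p.1) (y p.2)) *
      ∏ p ∈ univ.offDiag \ A, (1 - φ (y p.1) (y p.2)) ∂(Measure.pi fun _ => ν) := by
  rw [vardP]
  congr! 4 with y
  ext p
  simp

lemma integrable_prod_mul_prod_one_sub [IsFiniteMeasure ν] {n : ℕ}
    (hmeas : Measurable (Function.uncurry φ)) (hφ : ∀ x y, φ x y ∈ Set.Icc (0 : ℝ) 1)
    (T C : Finset (Fin n × Fin n)) :
    Integrable (fun y : Fin n → Ω => (∏ p ∈ T, φ (y p.1) (y p.2)) *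
      ∏ p ∈ C, (1 - φ (y p.1) (y p.2))) (Measure.pi fun _ => ν) := by
  have hφ_comp : ∀ p : Fin n × Fin n, Measurable fun y : Fin n → Ω => φ (y p.1) (y p.2) :=
    fun p => hmeas.comp (f := fun y : Fin n → Ω => (y p.1, y p.2))
      ((measurable_pi_apply p.1).prodMk (measurable_pi_apply p.2))
  refine (integrable_const (1 : ℝ)).mono' ?_ (Filter.Eventually.of_forall fun y => ?_)
  · exact ((measurable_prod _ fun p _ => hφ_comp p).mul
      (measurable_prod _ fun p _ => measurable_const.sub (hφ_comp p))).aestronglyMeasurable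
  · rw [Real.norm_eq_abs, abs_mul, abs_prod, abs_prod]
    exact mul_le_one₀
      (prod_le_one (fun _ _ => abs_nonneg _) fun p _ => abs_le_one_of_mem_Icc (hφ _ _))
      (prod_nonneg fun _ _ => abs_nonneg _)
      (prod_le_one (fun _ _ => abs_nonneg _) fun p _ =>
        abs_le_one_of_mem_Icc (Set.Icc.one_sub_mem (hφ _ _)))

lemma sum_vardP_union [IsFiniteMeasure ν] {n : ℕ} (hmeas : Measurable (Function.uncurry φ))
    (hφ : ∀ x y, φ x y ∈ Set.Icc (0 : ℝ) 1) {S T : Finset (Fin n × Fin n)} (hST : S ⊆ T)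
    (hT : T ⊆ univ.offDiag) :
    ∑ B ∈ (univ.offDiag \ T).powerset, vardP ν φ (S ∪ B) =
      ∫ y : Fin n → Ω, (∏ p ∈ S, φ (y p.1) (y p.2)) *
        ∏ p ∈ T \ S, (1 - φ (y p.1) (y p.2)) ∂(Measure.pi fun _ => ν) := by
  simp_rw [vardP_eq_integral]
  rw [← integral_finsetSum _ fun B _ => integrable_prod_mul_prod_one_sub hmeas hφ _ _]
  congr! 2 with y
  exact sum_powerset_prod_mul_prod_one_sub hST hT fun p => φ (y p.1) (y p.2)

lemma integral_prod_succAbove_eq_integral_pow [IsFiniteMeasure ν] {m : ℕ} (i : Fin (m + 1))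
    {g : Ω → Ω → ℝ} (hg : Measurable (Function.uncurry g)) (hb : ∀ u v, |g u v| ≤ 1) :
    ∫ y : Fin (m + 1) → Ω, ∏ j : Fin m, g (y i) (y (i.succAbove j))
        ∂(Measure.pi fun _ => ν) =
      ∫ u, (∫ v, g u v ∂ν) ^ m ∂ν := by
  have hint : Integrable (fun z : Ω × (Fin m → Ω) => ∏ j, g z.1 (z.2 j))
      (ν.prod (Measure.pi fun _ => ν)) := by
    refine (integrable_const (1 : ℝ)).mono' ?_ (Filter.Eventually.of_forall fun z => ?_)
    · refine (measurable_prod _ fun j _ => ?_).aestronglyMeasurable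
      exact hg.comp (f := fun z : Ω × (Fin m → Ω) => (z.1, z.2 j))
        (measurable_fst.prodMk ((measurable_pi_apply j).comp measurable_snd))
    · rw [Real.norm_eq_abs, abs_prod]
      exact prod_le_one (fun _ _ => abs_nonneg _) fun j _ => hb _ _
  calc _ = ∫ z, ∏ j, g z.1 (z.2 j) ∂(ν.prod (Measure.pi fun _ => ν)) :=
        (measurePreserving_piFinSuccAbove (fun _ => ν) i).integral_comp' _
    _ = _ := by
        rw [integral_prod _ hint]
        simp_rw [integral_fintype_prod_eq_pow, Fintype.card_fin]

lemma integral_pow_add_integral_one_sub_pow_pos [IsFiniteMeasure ν] [NeZero ν] {q : Ω → ℝ}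
    (hq : Measurable q) (hq01 : ∀ u, q u ∈ Set.Icc (0 : ℝ) 1) (m : ℕ) :
    0 < ∫ u, q u ^ m ∂ν + ∫ u, (1 - q u) ^ m ∂ν := by
  have hbounded : ∀ r : Ω → ℝ, Measurable r → (∀ u, r u ∈ Set.Icc (0 : ℝ) 1) →
      Integrable (fun u => r u ^ m) ν := fun r hr hr01 =>
    (integrable_const (1 : ℝ)).mono' (hr.pow_const m).aestronglyMeasurable
      (Filter.Eventually.of_forall fun u => by
        rw [norm_pow]
        exact pow_le_one₀ (norm_nonneg _) (abs_le_one_of_mem_Icc (hr01 u)))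
  have h1q01 : ∀ u, 1 - q u ∈ Set.Icc (0 : ℝ) 1 := fun u => Set.Icc.one_sub_mem (hq01 u)
  have hpos : ∀ u, 0 < q u ^ m + (1 - q u) ^ m := fun u => by
    rcases (hq01 u).1.eq_or_lt with h | h
    · simp only [← h, sub_zero, one_pow]
      positivity
    · exact add_pos_of_pos_of_nonneg (pow_pos h m) (pow_nonneg (h1q01 u).1 m)
  have hint₀ := hbounded q hq hq01
  have hint₁ := hbounded (fun u => 1 - q u) (measurable_const.sub hq) h1q01
  rw [← integral_add hint₀ hint₁, integral_pos_iff_support_of_nonneg (fun u => (hpos u).le)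
    (hint₀.add hint₁), Function.support_eq_univ fun u => (hpos u).ne']
  exact Measure.measure_univ_pos.2 (NeZero.ne ν)

lemma sum_vardP_add_vardP_outArcs_union_pos [IsProbabilityMeasure ν] {m : ℕ}
    (hmeas : Measurable (Function.uncurry φ)) (hφ : ∀ x y, φ x y ∈ Set.Icc (0 : ℝ) 1)
    (i : Fin (m + 1)) :
    0 < ∑ B ∈ (univ.offDiag \ outArcs i).powerset,
      (vardP ν φ B + vardP ν φ (outArcs i ∪ B)) := by
  have hnone := sum_vardP_union (ν := ν) hmeas hφ (empty_subset _) (outArcs_subset_offDiag i)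
  have hall := sum_vardP_union (ν := ν) hmeas hφ subset_rfl (outArcs_subset_offDiag i)
  simp only [empty_union, sdiff_empty, sdiff_self, bot_eq_empty, prod_empty, one_mul, mul_one]
    at hnone hall
  have hφ_abs : ∀ u v, |φ u v| ≤ 1 := fun u v => abs_le_one_of_mem_Icc (hφ u v)
  have h1φ_abs : ∀ u v, |1 - φ u v| ≤ 1 := fun u v =>
    abs_le_one_of_mem_Icc (Set.Icc.one_sub_mem (hφ u v))
  have hφ_int : ∀ u, Integrable (φ u) ν := fun u =>
    (integrable_const (1 : ℝ)).mono' (hmeas.comp measurable_prodMk_left).aestronglyMeasurable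
      (Filter.Eventually.of_forall fun v => hφ_abs u v)
  have hone_sub : ∀ u, ∫ v, (1 - φ u v) ∂ν = 1 - ∫ v, φ u v ∂ν := fun u => by
    rw [integral_sub (integrable_const 1) (hφ_int u), integral_const, probReal_univ, one_smul]
  rw [sum_add_distrib, hnone, hall]
  simp_rw [prod_outArcs i]
  rw [integral_prod_succAbove_eq_integral_pow i (measurable_const.sub hmeas) h1φ_abs,
    integral_prod_succAbove_eq_integral_pow i hmeas hφ_abs, add_comm]
  simp_rw [hone_sub]
  refine integral_pow_add_integral_one_sub_pow_pos ?_ (fun u => ⟨?_, ?_⟩) m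
  · exact hmeas.stronglyMeasurable.integral_prod_right'.measurable
  · exact integral_nonneg fun v => (hφ u v).1
  · simpa using integral_mono (hφ_int u) (integrable_const 1) fun v => (hφ u v).2

end VARD

theorem stmt10_general {n d k : ℕ} (hk : 1 ≤ k) (hkn : k < n - 1)
    (nrm : (Fin d → ℝ) → ℝ)
    (μ : Measure (Fin d → ℝ))
    (htf : ∀ᵐ x ∂(Measure.pi fun _ : Fin n => μ), TieFree nrm x)
    (Ω : Type*) [MeasurableSpace Ω] (ν : Measure Ω) [IsProbabilityMeasure ν]
    (φ : Ω → Ω → ℝ) (hmeas : Measurable (Function.uncurry φ))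
    (hφ : ∀ x y, φ x y ∈ Set.Icc (0 : ℝ) 1) :
    ¬ ∀ A : Finset (Fin n × Fin n), IsDigraph A →
        (Measure.pi (fun _ : Fin n => μ) {x | kNND k nrm x = A}).toReal = vardP ν φ A := by
  intro h
  obtain ⟨m, rfl⟩ : ∃ m, n = m + 1 := ⟨n - 1, by omega⟩
  refine (sum_vardP_add_vardP_outArcs_union_pos (ν := ν) hmeas hφ (0 : Fin (m + 1))).ne'
    (sum_eq_zero fun B hB => ?_)
  obtain ⟨hB, hB_out⟩ := subset_sdiff.1 (mem_powerset.1 hB)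
  have hnone : {x | kNND k nrm x = B} = ∅ :=
    Set.eq_empty_of_forall_notMem fun x (hx : kNND k nrm x = B) => by
      obtain ⟨p, hp⟩ := kNND_inter_outArcs_nonempty (nrm := nrm) (x := x) hk (by omega) 0
      rw [hx, mem_inter] at hp
      exact disjoint_left.1 hB_out hp.1 hp.2
  have hall : {x | kNND k nrm x = outArcs 0 ∪ B} ⊆ {x | ¬ TieFree nrm x} :=
    fun x (hx : kNND k nrm x = outArcs 0 ∪ B) htfx =>
      not_outArcs_subset_kNND htfx hkn 0 (hx ▸ subset_union_left)
  rw [← h B (isDigraph_of_subset_offDiag hB), ← h (outArcs 0 ∪ B)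
    (isDigraph_of_subset_offDiag (union_subset (outArcs_subset_offDiag 0) hB)), hnone,
    measure_mono_null hall (ae_iff.1 htf)]
  simp

/-- No random nearest neighbor digraph is a vertex-arc random digraph. -/
theorem stmt10 {n d k : ℕ} (hn : 3 ≤ n) (hd : 1 ≤ d) (hk : 1 ≤ k) (hkn : k < n - 1)
    (nrm : (Fin d → ℝ) → ℝ)
    (hnrm0 : ∀ v, nrm v = 0 ↔ v = 0)
    (hnrm_smul : ∀ (c : ℝ) (v : Fin d → ℝ), nrm (c • v) = |c| * nrm v)
    (hnrm_add : ∀ u v : Fin d → ℝ, nrm (u + v) ≤ nrm u + nrm v)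
    (μ : Measure (Fin d → ℝ)) [IsProbabilityMeasure μ]
    (htf : ∀ᵐ x ∂(Measure.pi fun _ : Fin n => μ), TieFree nrm x)
    (Ω : Type*) [MeasurableSpace Ω] (ν : Measure Ω) [IsProbabilityMeasure ν]
    (φ : Ω → Ω → ℝ) (hmeas : Measurable (Function.uncurry φ))
    (hφ : ∀ x y, φ x y ∈ Set.Icc (0 : ℝ) 1) :
    ¬ ∀ A : Finset (Fin n × Fin n), IsDigraph A →
        (Measure.pi (fun _ : Fin n => μ) {x | kNND k nrm x = A}).toReal = vardP ν φ A :=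
  stmt10_general hk hkn nrm μ htf Ω ν φ hmeas hφ
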